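/- For every e ≥ 1, the number of pairs (G, f) where G is a graph on the vertex set {0,1,...,e} with exactly e edges and f is the identity which is a graceful labelling of G, equals e! ; equivalently, the number of ways to choose, for each i ∈ {1,...,e}, one pair (j, j+i) with 0 ≤ j ≤ e - i, is ∏_{i=1}^{e} (e - i + 1) = e!. -/

import Mathlib

/-- The induced edge label `|f u - f v|` (computed in ℕ as `max - min`). -/
def edgeLabel {V : Type*} (f : V → ℕ) : Sym2 V → ℕ :=
  Sym2.lift ⟨fun u v => max (f u) (f v) - min (f u) (f v), fun u v => by
    simp [max_comm, min_comm]⟩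

/-!
Under the identity labelling of `{0, …, e}` the edges of label `i` are the `e - i + 1` pairs
`{j, j + i}`. A graph is gracefully labelled by the identity exactly when it picks one edge of
each label `i ∈ {1, …, e}`, and these choices are independent, so there are
`∏ i, (e - i + 1) = e!` such graphs.
-/

open Finset

theorem Set.ncard_setOf_bijOn_eq_prod {α β : Type*} [Fintype α] [DecidableEq β] (f : α → β)
    (t : Finset β) : {s : Set α | Set.BijOn f s t}.ncard = ∏ b ∈ t, #{a | f a = b} := by
  rw [← card_pi, ← Set.ncard_coe_finset]
  have hsec : ∀ g ∈ t.pi fun b => ({a | f a = b} : Finset α), ∀ b hb, f (g b hb) = b := by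
    intro g hg b hb
    simpa using Finset.mem_pi.mp hg b hb
  symm
  refine Set.ncard_congr (fun g _ => {a | ∃ b hb, g b hb = a}) ?_ ?_ ?_
  · intro g hg
    refine ⟨?_, ?_, fun b hb => ⟨g b hb, ⟨b, hb, rfl⟩, hsec g hg b hb⟩⟩
    · rintro _ ⟨b, hb, rfl⟩
      simpa [hsec g hg b hb] using hb
    · rintro _ ⟨b, hb, rfl⟩ _ ⟨b', hb', rfl⟩ h
      rw [hsec g hg, hsec g hg] at h
      subst h
      rfl
  · intro g g' hg hg' h
    funext b hb
    obtain ⟨b', hb', hgg'⟩ : g b hb ∈ {a | ∃ b hb, g' b hb = a} := h ▸ ⟨b, hb, rfl⟩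
    obtain rfl : b' = b := by rw [← hsec g' hg' b' hb', hgg', hsec g hg]
    exact hgg'.symm
  · intro s hs
    choose g hgs hgf using fun b (hb : b ∈ t) => hs.surjOn (mem_coe.mpr hb)
    refine ⟨g, Finset.mem_pi.mpr fun b hb => by simp [hgf b hb], ?_⟩
    ext a
    refine ⟨?_, fun ha => ⟨f a, hs.mapsTo ha, hs.injOn (hgs _ _) ha (hgf _ _)⟩⟩
    rintro ⟨b, hb, rfl⟩
    exact hgs b hb

theorem SimpleGraph.ncard_setOf_bijOn_edgeSet {V β : Type*} (ℓ : Sym2 V → β) (t : Set β)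
    (hdiag : ∀ v, ℓ s(v, v) ∉ t) :
    {G : SimpleGraph V | Set.BijOn ℓ G.edgeSet t}.ncard =
      {s : Set (Sym2 V) | Set.BijOn ℓ s t}.ncard := by
  rw [← Set.ncard_image_of_injective _ SimpleGraph.edgeSet_injective]
  congr 1
  ext s
  refine ⟨fun ⟨G, hG, hGs⟩ => hGs ▸ hG, fun hs => ⟨SimpleGraph.fromEdgeSet s, ?_⟩⟩
  have hs_diag : Disjoint s Sym2.diagSet := by
    refine Set.disjoint_left.mpr fun z hz hzd => ?_
    rw [← Sym2.range_diag] at hzd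
    obtain ⟨v, rfl⟩ := hzd
    exact hdiag v (hs.mapsTo hz)
  have hedges : (SimpleGraph.fromEdgeSet s).edgeSet = s := by
    rw [SimpleGraph.edgeSet_fromEdgeSet, sdiff_eq_left.mpr hs_diag]
  exact ⟨by simpa only [Set.mem_ofPred_eq, hedges] using hs, hedges⟩

theorem edgeLabel_mk {V : Type*} (f : V → ℕ) (u v : V) :
    edgeLabel f s(u, v) = max (f u) (f v) - min (f u) (f v) := rfl

theorem card_filter_edgeLabel_val_eq (n d : ℕ) :
    #{z : Sym2 (Fin n) | edgeLabel (fun v : Fin n => (v : ℕ)) z = d} = n - d := by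
  rw [← card_range (n - d)]
  symm
  refine card_bij (fun j hj => s(⟨j, by rw [mem_range] at hj; omega⟩,
    ⟨j + d, by rw [mem_range] at hj; omega⟩)) ?_ ?_ ?_
  · intro j hj
    simp [edgeLabel_mk]
  · intro a ha b hb h
    simp only [Sym2.eq_iff, Fin.ext_iff] at h
    omega
  · intro z hz
    induction z using Sym2.ind with
    | _ u v =>
      simp only [mem_filter, mem_univ, true_and, edgeLabel_mk] at hz
      rcases le_total (u : ℕ) v with huv | hvu
      · refine ⟨u, by rw [mem_range]; omega, ?_⟩
        simp only [Sym2.eq_iff, Fin.ext_iff, true_and]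
        omega
      · refine ⟨v, by rw [mem_range]; omega, ?_⟩
        simp only [Sym2.eq_iff, Fin.ext_iff, true_and]
        omega

theorem prod_Icc_sub_add_one_eq_factorial (e : ℕ) :
    ∏ i ∈ Icc 1 e, (e - i + 1) = e.factorial := by
  rw [← Nat.descFactorial_self, Nat.descFactorial_eq_prod_range, ← Ico_add_one_right_eq_Icc,
    prod_Ico_eq_prod_range]
  refine prod_congr rfl fun j hj => ?_
  rw [mem_range] at hj
  omega

theorem stmt18_general (e : ℕ) :
    {G : SimpleGraph (Fin (e + 1)) | G.edgeSet.ncard = e ∧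
        Set.BijOn (edgeLabel (fun v : Fin (e + 1) => (v : ℕ))) G.edgeSet
          (Set.Icc 1 e)}.ncard = Nat.factorial e ∧
    ∏ i ∈ Finset.Icc 1 e, (e - i + 1) = Nat.factorial e := by
  set ℓ := edgeLabel (fun v : Fin (e + 1) => (v : ℕ))
  have hcard : ∀ G : SimpleGraph (Fin (e + 1)),
      Set.BijOn ℓ G.edgeSet (Set.Icc 1 e) → G.edgeSet.ncard = e := fun G hG => by
    rw [hG.ncard_eq, ← coe_Icc, Set.ncard_coe_finset, Nat.card_Icc, Nat.add_sub_cancel]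
  have hdiag : ∀ v, ℓ s(v, v) ∉ (Icc 1 e : Set ℕ) := by simp [ℓ, edgeLabel_mk]
  have hfibres : ∀ i ∈ Icc 1 e, #{z | ℓ z = i} = e - i + 1 := fun i hi => by
    rw [card_filter_edgeLabel_val_eq]
    rw [mem_Icc] at hi
    omega
  refine ⟨?_, prod_Icc_sub_add_one_eq_factorial e⟩
  simp_rw [and_iff_right_of_imp (hcard _)]
  rw [← coe_Icc, SimpleGraph.ncard_setOf_bijOn_edgeSet ℓ _ hdiag, Set.ncard_setOf_bijOn_eq_prod,
    prod_congr rfl hfibres, prod_Icc_sub_add_one_eq_factorial]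

/-- Sheppard's theorem: for every `e ≥ 1` there are exactly `e!` graphs on the
vertex set `{0,…,e}` with `e` edges for which the identity labelling is
graceful; equivalently, `∏_{i=1}^{e} (e - i + 1) = e!`. -/
theorem stmt18 (e : ℕ) (he : 1 ≤ e) :
    {G : SimpleGraph (Fin (e + 1)) | G.edgeSet.ncard = e ∧
        Set.BijOn (edgeLabel (fun v : Fin (e + 1) => (v : ℕ))) G.edgeSet
          (Set.Icc 1 e)}.ncard = Nat.factorial e ∧
    ∏ i ∈ Finset.Icc 1 e, (e - i + 1) = Nat.factorial e :=
  stmt18_general e
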